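/- Let G be a simple graph and let C be a cycle of G containing consecutive vertices t, v, w, x, y, z. Let b and c be two distinct vertices of G not on C such that b is adjacent to t and w, and c is adjacent to x and z, and suppose v is adjacent to y in G. Then G contains a cycle of length |C| + 2 whose vertex set is V(C) ∪ {b, c}; the new cycle is obtained from C by replacing the path (t, v, w, x, y, z) with the path (t, b, w, v, y, x, c, z). -/

import Mathlib

/-!
Rotating and, if necessary, reversing `C`, write it as `p ++ r`, where `p` is the path
`t v w x y z` and `r` runs from `z` back to `t`. The path `q = t b w v y x c z` has the same
ends as `p`, and each of its inner vertices is an inner vertex of `p` or lies off `C`, so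
`q ++ r` is again a cycle; its edges are those of `r` together with those of `q`.
-/

namespace SimpleGraph.Walk

variable {V : Type*} {G : SimpleGraph V}

lemma IsPath.exists_eq_cons_of_mem_edges {u v w : V} {p : G.Walk u w} (hp : p.IsPath)
    (he : s(u, v) ∈ p.edges) : ∃ (h : G.Adj u v) (q : G.Walk v w), p = cons h q := by
  cases p with
  | nil => simp at he
  | cons h q =>
    rw [cons_isPath_iff] at hp
    rw [edges_cons, List.mem_cons] at he
    rcases he with he | he
    · obtain rfl := Sym2.congr_right.mp he
      exact ⟨h, q, rfl⟩
    · exact absurd (q.fst_mem_support_of_mem_edges he) hp.2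

lemma IsCycle.exists_eq_cons_or_reverse_eq_cons {u v : V} {c : G.Walk u u} (hc : c.IsCycle)
    (he : s(u, v) ∈ c.edges) :
    ∃ (h : G.Adj u v) (p : G.Walk v u), c = cons h p ∨ c.reverse = cons h p := by
  cases c with
  | nil => simp at he
  | cons h q =>
    rw [cons_isCycle_iff] at hc
    rw [edges_cons, List.mem_cons] at he
    rcases he with he | he
    · obtain rfl := Sym2.congr_right.mp he
      exact ⟨h, q, .inl rfl⟩
    · obtain ⟨h', q', hq'⟩ := hc.1.reverse.exists_eq_cons_of_mem_edges (by simpa using he)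
      exact ⟨h', q'.append (cons h.symm nil), .inr (by rw [reverse_cons, hq', cons_append])⟩

lemma IsCycle.exists_cons_of_mem_edges {u t v : V} {c : G.Walk u u} (hc : c.IsCycle)
    (he : s(t, v) ∈ c.edges) :
    ∃ (h : G.Adj t v) (p : G.Walk v t), (cons h p).IsCycle ∧ (cons h p).edges.Perm c.edges ∧
      ∀ s, s ∈ (cons h p).support ↔ s ∈ c.support := by
  classical
  have ht := c.fst_mem_support_of_mem_edges he
  have hd : (c.rotate t ht).IsCycle := hc.rotate ht
  have hde : (c.rotate t ht).edges.Perm c.edges := (c.rotate_edges t ht).perm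
  obtain ⟨h, p, hdp | hdp⟩ := hd.exists_eq_cons_or_reverse_eq_cons (hde.mem_iff.mpr he)
  · refine ⟨h, p, ?_⟩
    rw [← hdp]
    exact ⟨hd, hde, fun s => mem_support_rotate_iff ..⟩
  · refine ⟨h, p, ?_⟩
    rw [← hdp, edges_reverse]
    exact ⟨hd.reverse, (List.reverse_perm _).trans hde, by simp⟩

lemma IsCycle.isCycle_append_of_replace {u v : V} {p q : G.Walk u v} {r : G.Walk v u}
    (hc : (p.append r).IsCycle) (hp : ¬ p.Nil) (hq : q.IsPath) (hq1 : 1 < q.length)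
    (hqs : ∀ s ∈ q.support.tail, s ∈ p.support.tail ∨ s ∉ (p.append r).support) :
    (q.append r).IsCycle := by
  refine hq.isCycle_append (hc.isPath_of_append_right hp) (fun s hsq hsr => ?_) (.inl hq1)
  have hnd := hc.support_nodup
  rw [tail_support_append, List.nodup_append'] at hnd
  rcases hqs s hsq with hsp | hsc
  · exact hnd.2.2 hsp hsr
  · exact hsc ((mem_support_append_iff _ _).mpr (.inr (List.mem_of_mem_tail hsr)))

lemma IsTrail.edgeSet_append_of_replace {u v w : V} {p q : G.Walk u v} {r : G.Walk v w}
    (hpr : (p.append r).IsTrail) :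
    (q.append r).edgeSet = ((p.append r).edgeSet \ p.edgeSet) ∪ q.edgeSet := by
  have hdisj := ((isTrail_append p r).mp hpr).2.2
  ext e
  simp only [edgeSet_append, Set.mem_union, Set.mem_sdiff]
  have := @hdisj e
  tauto

lemma IsCycle.exists_append_of_mem_edges {u t v w x y z : V} {c : G.Walk u u} (hc : c.IsCycle)
    (hd : [t, v, w, x, y, z].Nodup) (htv : s(t, v) ∈ c.edges) (hvw : s(v, w) ∈ c.edges)
    (hwx : s(w, x) ∈ c.edges) (hxy : s(x, y) ∈ c.edges) (hyz : s(y, z) ∈ c.edges) :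
    ∃ (p : G.Walk t z) (r : G.Walk z t), p.support = [t, v, w, x, y, z] ∧
      p.edges = [s(t, v), s(v, w), s(w, x), s(x, y), s(y, z)] ∧ (p.append r).IsCycle ∧
      (p.append r).edges.Perm c.edges ∧ ∀ s, s ∈ (p.append r).support ↔ s ∈ c.support := by
  obtain ⟨h₁, P, hcyc, hedges, hsupp⟩ := hc.exists_cons_of_mem_edges htv
  have hP := ((cons_isCycle_iff _ _).mp hcyc).1
  simp only [List.nodup_cons, List.mem_cons, List.not_mem_nil, not_or] at hd
  obtain ⟨⟨htv', htw, htx, hty, htz, -⟩, ⟨hvw', hvx, hvy, hvz, -⟩, ⟨hwx', hwy, hwz, -⟩,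
    ⟨hxy', hxz, -⟩, -⟩ := hd
  have mem : ∀ {e}, e ∈ c.edges → e ∈ (cons h₁ P).edges := hedges.mem_iff.mpr
  obtain ⟨h₂, Q, rfl⟩ := hP.exists_eq_cons_of_mem_edges (v := w)
    (by simpa [Ne.symm htv', Ne.symm htw] using mem hvw)
  obtain ⟨h₃, R, rfl⟩ := hP.of_cons.exists_eq_cons_of_mem_edges (v := x)
    (by simpa [Ne.symm htx, Ne.symm hvw', Ne.symm hvx] using mem hwx)
  obtain ⟨h₄, S, rfl⟩ := hP.of_cons.of_cons.exists_eq_cons_of_mem_edges (v := y)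
    (by simpa [Ne.symm hty, Ne.symm hvy, Ne.symm hwx', Ne.symm hwy] using mem hxy)
  obtain ⟨h₅, r, rfl⟩ := hP.of_cons.of_cons.of_cons.exists_eq_cons_of_mem_edges (v := z)
    (by simpa [Ne.symm htz, Ne.symm hvz, Ne.symm hwz, Ne.symm hxy', Ne.symm hxz] using mem hyz)
  exact ⟨cons h₁ (cons h₂ (cons h₃ (cons h₄ (cons h₅ nil)))), r, rfl, rfl, hcyc, hedges, hsupp⟩

end SimpleGraph.Walk

open SimpleGraph Walk

/-- First replacement of Case 4b: if `t, v, w, x, y, z` are consecutive vertices of a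
cycle `C`, `b ≠ c` are vertices off `C` with `b` adjacent to `t, w` and `c` adjacent to
`x, z`, and `v` is adjacent to `y` in `G`, then `G` has a cycle of length `|C| + 2` on
vertex set `V(C) ∪ {b, c}`, obtained from `C` by replacing the path `(t, v, w, x, y, z)`
with the path `(t, b, w, v, y, x, c, z)`. -/
theorem case4b_replacement {V : Type*} (G : SimpleGraph V) {v0 : V}
    (C : G.Walk v0 v0) (hC : C.IsCycle) (t v w x y z b c : V)
    (hdist : [t, v, w, x, y, z].Pairwise (· ≠ ·))
    (htv : s(t, v) ∈ C.edges) (hvw : s(v, w) ∈ C.edges) (hwx : s(w, x) ∈ C.edges)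
    (hxy : s(x, y) ∈ C.edges) (hyz : s(y, z) ∈ C.edges)
    (hbc : b ≠ c) (hb : b ∉ C.support) (hc : c ∉ C.support)
    (hbt : G.Adj b t) (hbw : G.Adj b w) (hcx : G.Adj c x) (hcz : G.Adj c z)
    (hvy : G.Adj v y) :
    ∃ (w0 : V) (C' : G.Walk w0 w0), C'.IsCycle ∧ C'.length = C.length + 2 ∧
      (∀ s, s ∈ C'.support ↔ s ∈ C.support ∨ s = b ∨ s = c) ∧
      {e | e ∈ C'.edges} =
        ({e | e ∈ C.edges} \ {s(t, v), s(v, w), s(w, x), s(x, y), s(y, z)}) ∪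
          {s(t, b), s(b, w), s(w, v), s(v, y), s(y, x), s(x, c), s(c, z)} := by
  obtain ⟨p, r, hps, hpe, hcyc, hedges, hsupp⟩ :=
    hC.exists_append_of_mem_edges hdist htv hvw hwx hxy hyz
  let q : G.Walk t z := cons hbt.symm (cons hbw (cons (C.adj_of_mem_edges hvw).symm
    (cons hvy (cons (C.adj_of_mem_edges hxy).symm (cons hcx.symm (cons hcz nil))))))
  simp only [← hsupp, mem_support_append_iff, hps, List.mem_cons, List.not_mem_nil, or_false,
    not_or] at hb hc
  have hq : q.IsPath := by
    refine IsPath.mk' ?_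
    simp only [List.pairwise_cons] at hdist
    simp only [q, support_cons, support_nil, List.nodup_cons, List.mem_cons, List.not_mem_nil,
      List.nodup_nil]
    grind
  have hqs : ∀ s ∈ q.support.tail, s ∈ p.support.tail ∨ s ∉ (p.append r).support := by
    simp [q, hps, mem_support_append_iff, hb, hc]
  have hp : ¬ p.Nil := by simp [← length_eq_zero_iff, ← length_edges, hpe]
  refine ⟨t, q.append r, hcyc.isCycle_append_of_replace hp hq (by simp [q]) hqs, ?_, ?_, ?_⟩
  · rw [← length_edges C, ← hedges.length_eq]
    simp [q, hpe]
  · intro s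
    simp only [← hsupp, q, cons_append, nil_append, support_cons, List.mem_cons,
      mem_support_append_iff, hps, List.not_mem_nil, or_false]
    grind [r.start_mem_support]
  · have hCe : (p.append r).edgeSet = C.edgeSet := Set.ext fun _ => hedges.mem_iff
    have hpe' : p.edgeSet = {s(t, v), s(v, w), s(w, x), s(x, y), s(y, z)} := by
      ext; simp [Walk.edgeSet, hpe]
    change (q.append r).edgeSet = _
    rw [hcyc.isTrail.edgeSet_append_of_replace, hCe, hpe']
    congr 1
    ext; simp [q, Walk.edgeSet]
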